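/- Define h(q) := ((4q² − 3)K(q) + 2E(q))/√(2q² − 1) on (1/√2, 1). Then h'(q) = −f(q)/((2q²−1)^{3/2} q(1−q²)) for q ∈ (1/√2,1), where f(q) = (4q⁴−5q²+1)K(q) + (−8q⁴+8q²−1)E(q). In particular h is decreasing on (1/√2, q̂] and increasing on [q̂, 1), where q̂ is the unique zero of f. -/

import Mathlib

/-!
Differentiating under the integral sign gives `K' = q J₃` and `E' = -q J₁`, where
`Jₙ = ∫ sin²θ / Δ^(n/2)` and `Δ = 1 - q² sin²θ`. Since `q² sin²θ / √Δ = 1/√Δ - √Δ`,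
`q² J₁ = K - E`; integrating `d/dθ (sin θ cos θ / √Δ) = cos²θ/√Δ - (1 - q²) sin²θ/Δ^(3/2)`
over `[0, π/2]` gives `(1 - q²) J₃ = K - J₁`. Hence the classical formulas
`K' = (E - (1-q²)K) / (q(1-q²))` and `E' = (E - K)/q`, from which `h'` is algebra.

For the sign of `f`: `2E - K` is strictly decreasing on `(1/√2, 1)`, so `K < 2E` before `q*`
and `2E ≤ K` from `q*` on. Where `K < 2E`, `f' = q((20q²-13)K + 20(1-2q²)E) < -3qK < 0`, so `f`
decreases through its zero `q̂`; where `2E ≤ K`, `f ≤ (1 - 2q²)E < 0`.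
-/

open Real Set Filter MeasureTheory

noncomputable def Kc (q : ℝ) : ℝ := ∫ θ in (0:ℝ)..(π/2), 1 / Real.sqrt (1 - q^2 * Real.sin θ^2)

noncomputable def Ec (q : ℝ) : ℝ := ∫ θ in (0:ℝ)..(π/2), Real.sqrt (1 - q^2 * Real.sin θ^2)

noncomputable def fc (q : ℝ) : ℝ := (4*q^4 - 5*q^2 + 1) * Kc q + (-8*q^4 + 8*q^2 - 1) * Ec q


noncomputable def hc (q : ℝ) : ℝ := ((4*q^2 - 3) * Kc q + 2 * Ec q) / Real.sqrt (2*q^2 - 1)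

theorem hasDerivAt_intervalIntegral_of_continuousOn {F F' : ℝ → ℝ → ℝ} {U : Set ℝ} {x₀ a b : ℝ}
    (hU : IsOpen U) (hx₀ : x₀ ∈ U) (hF : ∀ x ∈ U, ContinuousOn (F x) (uIcc a b))
    (hF' : ContinuousOn (Function.uncurry F') (U ×ˢ uIcc a b))
    (hderiv : ∀ x ∈ U, ∀ t ∈ uIcc a b, HasDerivAt (F · t) (F' x t) x) :
    HasDerivAt (fun x => ∫ t in a..b, F x t) (∫ t in a..b, F' x₀ t) x₀ := by
  obtain ⟨ε, hε, hεU⟩ := Metric.nhds_basis_closedBall.mem_iff.1 (hU.mem_nhds hx₀)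
  have hball : Metric.ball x₀ ε ⊆ U := Metric.ball_subset_closedBall.trans hεU
  obtain ⟨C, hC⟩ := (isCompact_closedBall x₀ ε |>.prod isCompact_uIcc).exists_bound_of_continuousOn
    (hF'.mono (prod_mono hεU subset_rfl))
  have hF'x₀ : ContinuousOn (F' x₀) (uIcc a b) :=
    hF'.comp (continuousOn_const.prodMk continuousOn_id) fun t ht => ⟨hx₀, ht⟩
  refine (intervalIntegral.hasDerivAt_integral_of_dominated_loc_of_deriv_le (bound := fun _ => C)
    (Metric.ball_mem_nhds x₀ hε) ?_ (hF x₀ hx₀).intervalIntegrable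
    ((hF'x₀.mono uIoc_subset_uIcc).aestronglyMeasurable measurableSet_uIoc)
    (Eventually.of_forall fun t ht x hx => hC (x, t) ⟨Metric.ball_subset_closedBall hx,
      uIoc_subset_uIcc ht⟩)
    intervalIntegrable_const
    (Eventually.of_forall fun t ht x hx => hderiv x (hball hx) t (uIoc_subset_uIcc ht))).2
  filter_upwards [hU.mem_nhds hx₀] with x hx
  exact ((hF x hx).mono uIoc_subset_uIcc).aestronglyMeasurable measurableSet_uIoc

lemma one_sub_sq_mul_sin_sq_pos {q : ℝ} (hq : q^2 < 1) (θ : ℝ) : 0 < 1 - q^2 * sin θ^2 := by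
  nlinarith [sin_sq_le_one θ, sq_nonneg q]

lemma sqrt_one_sub_sq_mul_sin_sq_pos {q : ℝ} (hq : q^2 < 1) (θ : ℝ) :
    0 < √(1 - q^2 * sin θ^2) :=
  sqrt_pos.mpr (one_sub_sq_mul_sin_sq_pos hq θ)

noncomputable def Jc (n : ℕ) (q : ℝ) : ℝ :=
  ∫ θ in (0:ℝ)..(π/2), sin θ^2 / √(1 - q^2 * sin θ^2) ^ n

lemma continuous_sin_sq_div_sqrt_pow {q : ℝ} (hq : q^2 < 1) (n : ℕ) :
    Continuous fun θ => sin θ^2 / √(1 - q^2 * sin θ^2) ^ n := by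
  fun_prop (disch := intros; simp_all [(sqrt_one_sub_sq_mul_sin_sq_pos _ _).ne'])

lemma continuous_one_div_sqrt {q : ℝ} (hq : q^2 < 1) :
    Continuous fun θ => 1 / √(1 - q^2 * sin θ^2) := by
  fun_prop (disch := intros; simp_all [(sqrt_one_sub_sq_mul_sin_sq_pos _ _).ne'])

lemma Kc_pos {q : ℝ} (hq : q^2 < 1) : 0 < Kc q :=
  intervalIntegral.intervalIntegral_pos_of_pos
    ((continuous_one_div_sqrt hq).intervalIntegrable _ _)
    (fun θ => one_div_pos.mpr (sqrt_one_sub_sq_mul_sin_sq_pos hq θ)) (by positivity)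

lemma Ec_pos {q : ℝ} (hq : q^2 < 1) : 0 < Ec q :=
  intervalIntegral.intervalIntegral_pos_of_pos (Continuous.intervalIntegrable (by fun_prop) _ _)
    (sqrt_one_sub_sq_mul_sin_sq_pos hq) (by positivity)

lemma sq_mul_Jc_one {q : ℝ} (hq : q^2 < 1) : q^2 * Jc 1 q = Kc q - Ec q := by
  rw [Kc, Ec, ← intervalIntegral.integral_sub ((continuous_one_div_sqrt hq).intervalIntegrable _ _)
    (Continuous.intervalIntegrable (by fun_prop) _ _), Jc, ← intervalIntegral.integral_const_mul]
  refine intervalIntegral.integral_congr fun θ _ => ?_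
  have hΔ := one_sub_sq_mul_sin_sq_pos hq θ
  have hs := sq_sqrt hΔ.le
  field_simp
  linarith

lemma hasDerivAt_sin_mul_cos_div_sqrt {q : ℝ} (hq : q^2 < 1) (θ : ℝ) :
    HasDerivAt (fun t => sin t * cos t / √(1 - q^2 * sin t^2))
      (cos θ^2 / √(1 - q^2 * sin θ^2) - (1 - q^2) * (sin θ^2 / √(1 - q^2 * sin θ^2) ^ 3)) θ := by
  have hΔ := one_sub_sq_mul_sin_sq_pos hq θ
  have hr := sqrt_one_sub_sq_mul_sin_sq_pos hq θ
  have hΔ' : HasDerivAt (fun t => 1 - q^2 * sin t^2) (-(q^2 * (2 * sin θ ^ 1 * cos θ))) θ :=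
    (((hasDerivAt_sin θ).pow 2).const_mul (q^2)).const_sub 1
  refine (((hasDerivAt_sin θ).mul (hasDerivAt_cos θ)).div (hΔ'.sqrt hΔ.ne') hr.ne').congr_deriv ?_
  have hs := sq_sqrt hΔ.le
  set r := √(1 - q^2 * sin θ^2)
  simp only [Pi.mul_apply]
  field_simp
  linear_combination (-sin θ^2) * hs + q^2 * sin θ^2 * sin_sq_add_cos_sq θ

lemma one_sub_sq_mul_Jc_three {q : ℝ} (hq : q^2 < 1) : (1 - q^2) * Jc 3 q = Kc q - Jc 1 q := by
  have hcos_int : IntervalIntegrable (fun θ => cos θ^2 / √(1 - q^2 * sin θ^2)) volume 0 (π/2) :=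
    Continuous.intervalIntegrable (by
      fun_prop (disch := intros; simp_all [(sqrt_one_sub_sq_mul_sin_sq_pos _ _).ne'])) _ _
  have hsin_int :=
    ((continuous_sin_sq_div_sqrt_pow hq 3).intervalIntegrable (μ := volume) 0 (π/2)).const_mul
      (1 - q^2)
  have hcos : ∫ θ in (0:ℝ)..(π/2), cos θ^2 / √(1 - q^2 * sin θ^2) = Kc q - Jc 1 q := by
    rw [Kc, Jc, ← intervalIntegral.integral_sub
      ((continuous_one_div_sqrt hq).intervalIntegrable _ _)
      ((continuous_sin_sq_div_sqrt_pow hq 1).intervalIntegrable _ _)]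
    refine intervalIntegral.integral_congr fun θ _ => ?_
    simp only [pow_one, cos_sq', sub_div]
  have hint := intervalIntegral.integral_eq_sub_of_hasDerivAt
    (fun θ _ => hasDerivAt_sin_mul_cos_div_sqrt hq θ) (hcos_int.sub hsin_int)
  rw [intervalIntegral.integral_sub hcos_int hsin_int, hcos, intervalIntegral.integral_const_mul,
    cos_pi_div_two, sin_zero] at hint
  simp only [mul_zero, zero_mul, zero_div, sub_zero] at hint
  rw [Jc]
  linarith

lemma hasDerivAt_one_div_sqrt_one_sub_sq_mul_sin_sq {x : ℝ} (hx : x^2 < 1) (θ : ℝ) :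
    HasDerivAt (fun y => 1 / √(1 - y^2 * sin θ^2))
      (x * (sin θ^2 / √(1 - x^2 * sin θ^2) ^ 3)) x := by
  have hΔ := one_sub_sq_mul_sin_sq_pos hx θ
  have hΔ' : HasDerivAt (fun y => 1 - y^2 * sin θ^2) (-((2 * x^1) * sin θ^2)) x :=
    ((hasDerivAt_pow 2 x).mul_const (sin θ^2)).const_sub 1
  refine ((hasDerivAt_const x 1).div (hΔ'.sqrt hΔ.ne')
    (sqrt_one_sub_sq_mul_sin_sq_pos hx θ).ne').congr_deriv ?_
  have hs := sq_sqrt hΔ.le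
  set r := √(1 - x^2 * sin θ^2)
  field_simp
  ring

lemma hasDerivAt_sqrt_one_sub_sq_mul_sin_sq {x : ℝ} (hx : x^2 < 1) (θ : ℝ) :
    HasDerivAt (fun y => √(1 - y^2 * sin θ^2)) (-(x * (sin θ^2 / √(1 - x^2 * sin θ^2) ^ 1))) x := by
  have hΔ' : HasDerivAt (fun y => 1 - y^2 * sin θ^2) (-((2 * x^1) * sin θ^2)) x :=
    ((hasDerivAt_pow 2 x).mul_const (sin θ^2)).const_sub 1
  refine (hΔ'.sqrt (one_sub_sq_mul_sin_sq_pos hx θ).ne').congr_deriv ?_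
  have hr := sqrt_one_sub_sq_mul_sin_sq_pos hx θ
  field_simp

lemma isOpen_sq_lt_one : IsOpen {x : ℝ | x^2 < 1} :=
  isOpen_lt (continuous_pow 2) continuous_const

lemma hasDerivAt_Kc_Jc {q : ℝ} (hq : q^2 < 1) : HasDerivAt Kc (q * Jc 3 q) q := by
  have hF' : ContinuousOn (fun p : ℝ × ℝ => p.1 * (sin p.2^2 / √(1 - p.1^2 * sin p.2^2) ^ 3))
      {p | p.1^2 < 1} := by
    fun_prop (disch := intros; simp_all [(sqrt_one_sub_sq_mul_sin_sq_pos _ _).ne'])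
  have h := hasDerivAt_intervalIntegral_of_continuousOn (a := 0) (b := π/2)
    (F' := fun x θ => x * (sin θ^2 / √(1 - x^2 * sin θ^2) ^ 3)) isOpen_sq_lt_one hq
    (fun x hx => (continuous_one_div_sqrt hx).continuousOn) (hF'.mono fun _ hp => hp.1)
    (fun x hx θ _ => hasDerivAt_one_div_sqrt_one_sub_sq_mul_sin_sq hx θ)
  rwa [intervalIntegral.integral_const_mul] at h

lemma hasDerivAt_Ec_Jc {q : ℝ} (hq : q^2 < 1) : HasDerivAt Ec (-(q * Jc 1 q)) q := by
  have hF' : ContinuousOn (fun p : ℝ × ℝ => -(p.1 * (sin p.2^2 / √(1 - p.1^2 * sin p.2^2) ^ 1)))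
      {p | p.1^2 < 1} := by
    fun_prop (disch := intros; simp_all [(sqrt_one_sub_sq_mul_sin_sq_pos _ _).ne'])
  have h := hasDerivAt_intervalIntegral_of_continuousOn (a := 0) (b := π/2)
    (F' := fun x θ => -(x * (sin θ^2 / √(1 - x^2 * sin θ^2) ^ 1))) isOpen_sq_lt_one hq
    (fun x _ => (by fun_prop : Continuous fun θ => √(1 - x^2 * sin θ^2)).continuousOn)
    (hF'.mono fun _ hp => hp.1) (fun x hx θ _ => hasDerivAt_sqrt_one_sub_sq_mul_sin_sq hx θ)
  rwa [intervalIntegral.integral_neg, intervalIntegral.integral_const_mul] at h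

lemma hasDerivAt_Kc {q : ℝ} (hq0 : q ≠ 0) (hq : q^2 < 1) :
    HasDerivAt Kc ((Ec q - (1 - q^2) * Kc q) / (q * (1 - q^2))) q := by
  convert hasDerivAt_Kc_Jc hq using 1
  have h1 := sq_mul_Jc_one hq
  have h3 := one_sub_sq_mul_Jc_three hq
  have : 1 - q^2 ≠ 0 := by linarith
  field_simp
  linear_combination h1 - q^2 * h3

lemma hasDerivAt_Ec {q : ℝ} (hq0 : q ≠ 0) (hq : q^2 < 1) :
    HasDerivAt Ec ((Ec q - Kc q) / q) q := by
  convert hasDerivAt_Ec_Jc hq using 1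
  have h1 := sq_mul_Jc_one hq
  field_simp
  linear_combination h1

lemma hasDerivAt_fc {q : ℝ} (hq0 : q ≠ 0) (hq : q^2 < 1) :
    HasDerivAt fc (q * ((20*q^2 - 13) * Kc q + 20*(1 - 2*q^2) * Ec q)) q := by
  have hp1 : HasDerivAt (fun x : ℝ => 4*x^4 - 5*x^2 + 1) (16*q^3 - 10*q) q :=
    ((((hasDerivAt_pow 4 q).const_mul 4).sub ((hasDerivAt_pow 2 q).const_mul 5)).add_const 1)
      |>.congr_deriv (by norm_num; ring)
  have hp2 : HasDerivAt (fun x : ℝ => -8*x^4 + 8*x^2 - 1) (-32*q^3 + 16*q) q :=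
    ((((hasDerivAt_pow 4 q).const_mul (-8)).add ((hasDerivAt_pow 2 q).const_mul 8)).sub_const 1)
      |>.congr_deriv (by norm_num; ring)
  refine ((hp1.mul (hasDerivAt_Kc hq0 hq)).add (hp2.mul (hasDerivAt_Ec hq0 hq))).congr_deriv ?_
  have : 1 - q^2 ≠ 0 := by linarith
  field_simp
  ring

lemma rpow_three_halves {x : ℝ} (hx : 0 ≤ x) : x ^ ((3:ℝ)/2) = √x ^ 3 := by
  rw [sqrt_eq_rpow, ← rpow_natCast, ← rpow_mul hx]
  norm_num

lemma hasDerivAt_hc {q : ℝ} (hhalf : 1/2 < q^2) (hq : q^2 < 1) :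
    HasDerivAt hc (-fc q / ((2*q^2 - 1) ^ ((3:ℝ)/2) * q * (1 - q^2))) q := by
  have hq0 : q ≠ 0 := by rintro rfl; norm_num at hhalf
  have hv : 0 < 2*q^2 - 1 := by linarith
  have hr := sqrt_pos.mpr hv
  have hs := sq_sqrt hv.le
  have hp : HasDerivAt (fun x : ℝ => 4*x^2 - 3) (8*q) q :=
    (((hasDerivAt_pow 2 q).const_mul 4).sub_const 3).congr_deriv (by norm_num; ring)
  have hv' : HasDerivAt (fun x : ℝ => 2*x^2 - 1) (4*q) q :=
    (((hasDerivAt_pow 2 q).const_mul 2).sub_const 1).congr_deriv (by norm_num; ring)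
  refine (((hp.mul (hasDerivAt_Kc hq0 hq)).add ((hasDerivAt_Ec hq0 hq).const_mul 2)).div
    (hv'.sqrt hv.ne') hr.ne').congr_deriv ?_
  rw [rpow_three_halves hv.le, fc]
  have : 1 - q^2 ≠ 0 := by linarith
  set r := √(2*q^2 - 1)
  simp only [Pi.add_apply, Pi.mul_apply]
  field_simp
  linear_combination ((6*q^2 - 8*q^4 + 2) * Kc q + (4*q^2 - 2) * Ec q) * hs

lemma strictAntiOn_of_hasDerivAt_neg {f f' : ℝ → ℝ} {D : Set ℝ} (hD : Convex ℝ D)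
    (hf : ∀ x ∈ D, HasDerivAt f (f' x) x) (hf' : ∀ x ∈ interior D, f' x < 0) :
    StrictAntiOn f D :=
  strictAntiOn_of_deriv_neg hD (fun x hx => (hf x hx).continuousAt.continuousWithinAt)
    fun x hx => (hf x (interior_subset hx)).deriv ▸ hf' x hx

lemma strictMonoOn_of_hasDerivAt_pos {f f' : ℝ → ℝ} {D : Set ℝ} (hD : Convex ℝ D)
    (hf : ∀ x ∈ D, HasDerivAt f (f' x) x) (hf' : ∀ x ∈ interior D, 0 < f' x) :
    StrictMonoOn f D :=
  strictMonoOn_of_deriv_pos hD (fun x hx => (hf x hx).continuousAt.continuousWithinAt)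
    fun x hx => (hf x (interior_subset hx)).deriv ▸ hf' x hx

lemma pos_and_half_lt_sq_of_mem_Ioo {q : ℝ} (hq : q ∈ Ioo (1 / √2) 1) :
    0 < q ∧ 1/2 < q^2 ∧ q^2 < 1 := by
  have h0 : 0 < q := lt_trans (by positivity) hq.1
  have hsq := pow_lt_pow_left₀ hq.1 (by positivity) two_ne_zero
  rw [div_pow, one_pow, sq_sqrt zero_le_two] at hsq
  exact ⟨h0, hsq, by nlinarith [hq.2]⟩

lemma strictAntiOn_two_mul_Ec_sub_Kc :
    StrictAntiOn (fun q => 2 * Ec q - Kc q) (Ioo (1 / √2) 1) := by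
  refine strictAntiOn_of_hasDerivAt_neg (convex_Ioo _ _)
    (f' := fun q => 2 * ((Ec q - Kc q) / q) - (Ec q - (1 - q^2) * Kc q) / (q * (1 - q^2)))
    (fun q hq => ?_) fun q hq => ?_
  · obtain ⟨h0, -, h1⟩ := pos_and_half_lt_sq_of_mem_Ioo hq
    exact ((hasDerivAt_Ec h0.ne' h1).const_mul 2).sub (hasDerivAt_Kc h0.ne' h1)
  · rw [interior_Ioo] at hq
    obtain ⟨h0, hhalf, h1⟩ := pos_and_half_lt_sq_of_mem_Ioo hq
    have h1' : 0 < 1 - q^2 := by linarith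
    have hE := Ec_pos h1
    have hK := Kc_pos h1
    have : 2 * ((Ec q - Kc q) / q) - (Ec q - (1 - q^2) * Kc q) / (q * (1 - q^2))
        = ((1 - 2*q^2) * Ec q - (1 - q^2) * Kc q) / (q * (1 - q^2)) := by
      field_simp
      ring
    exact this ▸ div_neg_of_neg_of_pos (by nlinarith) (by positivity)

lemma strictAntiOn_fc {qstar : ℝ} (hqs : qstar < 1)
    (hKE : ∀ q ∈ Ioo (1 / √2) qstar, Kc q < 2 * Ec q) : StrictAntiOn fc (Ioc (1 / √2) qstar) := by
  have hsub : Ioc (1 / √2) qstar ⊆ Ioo (1 / √2) 1 := fun q hq => ⟨hq.1, hq.2.trans_lt hqs⟩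
  refine strictAntiOn_of_hasDerivAt_neg (convex_Ioc _ _)
    (f' := fun q => q * ((20*q^2 - 13) * Kc q + 20*(1 - 2*q^2) * Ec q))
    (fun q hq => ?_) fun q hq => ?_
  · obtain ⟨h0, -, h1⟩ := pos_and_half_lt_sq_of_mem_Ioo (hsub hq)
    exact hasDerivAt_fc h0.ne' h1
  · rw [interior_Ioc] at hq
    obtain ⟨h0, hhalf, h1⟩ := pos_and_half_lt_sq_of_mem_Ioo (hsub (Ioo_subset_Ioc_self hq))
    have hK := Kc_pos h1
    have := hKE q hq
    refine mul_neg_of_pos_of_neg h0 ?_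
    nlinarith

lemma fc_neg_of_two_mul_Ec_le_Kc {q : ℝ} (hhalf : 1/2 < q^2) (hq : q^2 < 1)
    (hKE : 2 * Ec q ≤ Kc q) : fc q < 0 := by
  have hE := Ec_pos hq
  have hcoef : 4*q^4 - 5*q^2 + 1 < 0 := by nlinarith
  have : (4*q^4 - 5*q^2 + 1) * Kc q ≤ (4*q^4 - 5*q^2 + 1) * (2 * Ec q) :=
    mul_le_mul_of_nonpos_left hKE hcoef.le
  rw [fc]
  nlinarith

lemma hc_deriv_denom_pos {q : ℝ} (hq : q ∈ Ioo (1 / √2) 1) :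
    0 < (2*q^2 - 1) ^ ((3:ℝ)/2) * q * (1 - q^2) := by
  obtain ⟨h0, hhalf, h1⟩ := pos_and_half_lt_sq_of_mem_Ioo hq
  have := rpow_pos_of_pos (by linarith : (0:ℝ) < 2*q^2 - 1) ((3:ℝ)/2)
  have : 0 < 1 - q^2 := by linarith
  positivity

lemma hasDerivAt_hc_of_mem {q : ℝ} (hq : q ∈ Ioo (1 / √2) 1) :
    HasDerivAt hc (-fc q / ((2*q^2 - 1) ^ ((3:ℝ)/2) * q * (1 - q^2))) q :=
  have h := pos_and_half_lt_sq_of_mem_Ioo hq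
  hasDerivAt_hc h.2.1 h.2.2

lemma strictAntiOn_hc {D : Set ℝ} (hD : Convex ℝ D) (hsub : D ⊆ Ioo (1 / √2) 1)
    (hf : ∀ q ∈ interior D, 0 < fc q) : StrictAntiOn hc D :=
  strictAntiOn_of_hasDerivAt_neg hD (fun _ hq => hasDerivAt_hc_of_mem (hsub hq)) fun q hq =>
    div_neg_of_neg_of_pos (neg_neg_of_pos (hf q hq))
      (hc_deriv_denom_pos (hsub (interior_subset hq)))

lemma strictMonoOn_hc {D : Set ℝ} (hD : Convex ℝ D) (hsub : D ⊆ Ioo (1 / √2) 1)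
    (hf : ∀ q ∈ interior D, fc q < 0) : StrictMonoOn hc D :=
  strictMonoOn_of_hasDerivAt_pos hD (fun _ hq => hasDerivAt_hc_of_mem (hsub hq)) fun q hq =>
    div_pos (neg_pos.mpr (hf q hq)) (hc_deriv_denom_pos (hsub (interior_subset hq)))

theorem stmt_14 (qstar : ℝ) (hqs : qstar ∈ Ioo (0:ℝ) 1) (hqs0 : 2 * Ec qstar = Kc qstar)
    (qhat : ℝ) (hqh : qhat ∈ Ioo (1 / Real.sqrt 2) qstar) (hqh0 : fc qhat = 0) :
    (∀ q ∈ Ioo (1 / Real.sqrt 2) (1:ℝ),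
      HasDerivAt hc (-fc q / ((2*q^2 - 1) ^ ((3:ℝ)/2) * q * (1 - q^2))) q) ∧
    StrictAntiOn hc (Ioc (1 / Real.sqrt 2) qhat) ∧
    StrictMonoOn hc (Ico qhat 1) := by
  have hqstar : qstar ∈ Ioo (1 / √2) 1 := ⟨hqh.1.trans hqh.2, hqs.2⟩
  have hg := strictAntiOn_two_mul_Ec_sub_Kc
  have hf := strictAntiOn_fc hqs.2 fun q hq => by
    have := hg ⟨hq.1, hq.2.trans hqs.2⟩ hqstar hq.2
    linarith
  have hqhat : qhat ∈ Ioc (1 / √2) qstar := ⟨hqh.1, hqh.2.le⟩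
  refine ⟨fun q hq => hasDerivAt_hc_of_mem hq,
    strictAntiOn_hc (convex_Ioc _ _) (fun q hq => ⟨hq.1, hq.2.trans_lt (hqh.2.trans hqs.2)⟩)
      fun q hq => ?_,
    strictMonoOn_hc (convex_Ico _ _) (fun q hq => ⟨hqh.1.trans_le hq.1, hq.2⟩) fun q hq => ?_⟩
  · rw [interior_Ioc] at hq
    exact hqh0 ▸ hf ⟨hq.1, hq.2.le.trans hqh.2.le⟩ hqhat hq.2
  · rw [interior_Ico] at hq
    rcases le_or_gt q qstar with hle | hgt
    · exact hqh0 ▸ hf hqhat ⟨hqh.1.trans hq.1, hle⟩ hq.1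
    · have hq' : q ∈ Ioo (1 / √2) 1 := ⟨hqh.1.trans hq.1, hq.2⟩
      have h := pos_and_half_lt_sq_of_mem_Ioo hq'
      refine fc_neg_of_two_mul_Ec_le_Kc h.2.1 h.2.2 ?_
      have := hg hqstar hq' hgt
      linarith
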